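/- Let φ(n) = Σ_{σ ∈ S_n} (-1)^{d(σ)}. For n ≥ 3 and 2 ≤ i ≤ n-1, the sum of (-1)^{d(σ)} over all permutations σ ∈ S_n whose value n occurs in position i equals -C(n-1, i-1) · φ(i-1) · φ(n-i). -/

import Mathlib

/-!
Read a permutation `σ` of `{1,…,n}` with `σ(i) = n` as a word `u n v`. It is determined by the set
`S` of the `i - 1` letters of `u` together with the relative orders `α ∈ S_{i-1}` of `u` and
`β ∈ S_{n-i}` of `v`; since the triples `(S, α, β)` and the permutations both number `(n-1)!`, this
correspondence is a bijection. Descents only see relative order, and the letter `n` adds exactly one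
descent (into the nonempty `v`), so `d(σ) = d(α) + d(β) + 1` and the signed sum factors as
`-C(n-1, i-1) φ(i-1) φ(n-i)`.
-/

/-- The descent number of a list: the number of indices `i` with `l.get (i+1) < l.get i`. -/
def descList (l : List ℕ) : ℕ := (l.zip l.tail).countP fun p => decide (p.2 < p.1)

/-- The descent number of a permutation of `{1,…,n}`, read as the word `σ(1) … σ(n)`. -/
def permDesc {n : ℕ} (σ : Equiv.Perm (Fin n)) : ℕ :=
  descList ((List.finRange n).map fun i => ((σ i : Fin n) : ℕ))

/-- The signed descent sum `φ(n) = Σ_{σ ∈ S_n} (-1)^{d(σ)}`. -/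
def phi (n : ℕ) : ℤ := ∑ σ : Equiv.Perm (Fin n), (-1) ^ permDesc σ

open Finset Equiv
open scoped Nat

theorem descList_cons_cons (a b : ℕ) (l : List ℕ) :
    descList (a :: b :: l) = (if b < a then 1 else 0) + descList (b :: l) := by
  simp [descList, List.countP_cons, add_comm]

theorem descList_cons_of_forall_lt {b : ℕ} {l : List ℕ} (hl : l ≠ []) (h : ∀ c ∈ l, c < b) :
    descList (b :: l) = descList l + 1 := by
  obtain ⟨c, l, rfl⟩ := List.exists_cons_of_ne_nil hl
  rw [descList_cons_cons, if_pos (h c List.mem_cons_self), add_comm]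

theorem descList_append_cons_of_forall_lt {b : ℕ} (l : List ℕ) :
    ∀ {k : List ℕ}, (∀ a ∈ k, a < b) → descList (k ++ b :: l) = descList k + descList (b :: l)
  | [], _ => by simp [descList]
  | [a], h => by simp [(h a List.mem_cons_self).not_gt, descList]
  | a :: a' :: k, h => by
    rw [List.cons_append, List.cons_append, descList_cons_cons, ← List.cons_append,
      descList_append_cons_of_forall_lt l fun x hx => h x (List.mem_cons_of_mem a hx),
      descList_cons_cons, add_assoc]

theorem descList_map_congr {γ : Type*} (l : List γ) {f g : γ → ℕ}
    (h : ∀ a b, f a < f b ↔ g a < g b) : descList (l.map f) = descList (l.map g) := by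
  simp only [descList, ← List.map_tail, List.zip_map, List.countP_map]
  exact List.countP_congr fun x _ => by simp [h]

theorem permDesc_eq_descList_ofFn {n : ℕ} (σ : Perm (Fin n)) :
    permDesc σ = descList (List.ofFn fun i => (σ i : ℕ)) := by
  rw [permDesc, List.ofFn_eq_map]

theorem descList_ofFn_comp_of_strictMono {n : ℕ} {e : Fin n → ℕ} (he : StrictMono e)
    (σ : Perm (Fin n)) : descList (List.ofFn fun i => e (σ i)) = permDesc σ := by
  rw [permDesc_eq_descList_ofFn, List.ofFn_comp' σ e, List.ofFn_comp' σ Fin.val]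
  exact descList_map_congr _ fun a b => by rw [he.lt_iff_lt, Fin.lt_def]

theorem card_filter_perm_apply_eq {α : Type*} [Fintype α] [DecidableEq α] (x y : α) :
    #{σ : Perm α | σ x = y} = (Fintype.card α - 1)! := by
  rw [← Fintype.card_subtype]
  let e : {σ : Perm α // σ x = y} ≃ ({a // a ≠ x} ≃ {b // b ≠ y}) :=
    ((equivCongr (optionSubtypeNe x).symm (Equiv.refl α)).subtypeEquiv
      fun σ => by simp).trans (optionSubtype y)
  rw [Fintype.card_congr e, Fintype.card_equiv (Fintype.equivOfCardEq (by simp)),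
    Fintype.card_subtype_compl, Fintype.card_subtype_eq]

theorem eq_and_eq_of_orderEmbOfFin_apply_eq {γ : Type*} [LinearOrder γ] {k : ℕ}
    {S T : Finset γ} (hS : #S = k) (hT : #T = k) {α β : Perm (Fin k)}
    (h : ∀ i, S.orderEmbOfFin hS (α i) = T.orderEmbOfFin hT (β i)) : S = T ∧ α = β := by
  have hST : S = T := by
    have hrange := congrArg Set.range (funext h : S.orderEmbOfFin hS ∘ α = T.orderEmbOfFin hT ∘ β)
    rwa [EquivLike.range_comp, EquivLike.range_comp, range_orderEmbOfFin, range_orderEmbOfFin,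
      coe_inj] at hrange
  subst hST
  exact ⟨rfl, Equiv.ext fun i => (S.orderEmbOfFin hS).injective (h i)⟩

variable {p q : ℕ}

theorem card_compl_eq_of_card_eq {S : Finset (Fin (p + q))} (hS : #S = p) : #Sᶜ = q := by
  rw [card_compl, Fintype.card_fin, hS, Nat.add_sub_cancel_left]

section

variable (S : {S : Finset (Fin (p + q)) // #S = p}) (α : Perm (Fin p)) (β : Perm (Fin q))

def shuffleMaxFun : Fin (p + q + 1) → Fin (p + q + 1) :=
  Fin.append (m := p) (n := q + 1) (fun k => (S.1.orderEmbOfFin S.2 (α k)).castSucc)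
    (Fin.cons (Fin.last (p + q)) fun k =>
      (S.1ᶜ.orderEmbOfFin (card_compl_eq_of_card_eq S.2) (β k)).castSucc)

theorem shuffleMaxFun_injective : Function.Injective (shuffleMaxFun S α β) := by
  refine Fin.append_injective_iff.mpr ⟨?_, Fin.cons_injective_iff.mpr ⟨?_, ?_⟩, ?_⟩
  · exact Fin.castSucc_injective _ |>.comp (S.1.orderEmbOfFin S.2).injective |>.comp α.injective
  · rintro ⟨k, hk⟩
    exact Fin.castSucc_ne_last _ hk
  · exact Fin.castSucc_injective _ |>.comp (S.1ᶜ.orderEmbOfFin _).injective |>.comp β.injective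
  · intro i j
    cases j using Fin.cases with
    | zero => exact Fin.castSucc_ne_last _
    | succ j =>
      rw [Fin.cons_succ, Ne, Fin.castSucc_inj]
      intro h
      have hS := S.1.orderEmbOfFin_mem S.2 (α i)
      have hSc := S.1ᶜ.orderEmbOfFin_mem (card_compl_eq_of_card_eq S.2) (β j)
      rw [← h, mem_compl] at hSc
      exact hSc hS

noncomputable def shuffleMax : Perm (Fin (p + q + 1)) :=
  Equiv.ofBijective (shuffleMaxFun S α β) (shuffleMaxFun_injective S α β).bijective_of_finite

theorem shuffleMax_apply_castAdd (k : Fin p) :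
    shuffleMax S α β (Fin.castAdd (q + 1) k) = (S.1.orderEmbOfFin S.2 (α k)).castSucc := by
  simp [shuffleMax, shuffleMaxFun]

theorem shuffleMax_apply_mid : shuffleMax S α β ⟨p, by omega⟩ = Fin.last (p + q) := by
  change shuffleMaxFun S α β (Fin.natAdd p (0 : Fin (q + 1))) = _
  simp [shuffleMaxFun]

theorem shuffleMax_apply_natAdd_succ (k : Fin q) :
    shuffleMax S α β (Fin.natAdd p k.succ) =
      (S.1ᶜ.orderEmbOfFin (card_compl_eq_of_card_eq S.2) (β k)).castSucc := by
  simp [shuffleMax, shuffleMaxFun]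

theorem ofFn_shuffleMax :
    (List.ofFn fun i => (shuffleMax S α β i : ℕ)) =
      (List.ofFn fun k => (S.1.orderEmbOfFin S.2 (α k) : ℕ)) ++
        (p + q) ::
          List.ofFn fun k => (S.1ᶜ.orderEmbOfFin (card_compl_eq_of_card_eq S.2) (β k) : ℕ) := by
  change List.ofFn (fun i : Fin (p + (q + 1)) => (shuffleMaxFun S α β i : ℕ)) = _
  rw [List.ofFn_add, List.ofFn_succ]
  simp [shuffleMaxFun]

theorem permDesc_shuffleMax (hq : 0 < q) :
    permDesc (shuffleMax S α β) = permDesc α + permDesc β + 1 := by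
  have hmono : ∀ {k} {T : Finset (Fin (p + q))} (hT : #T = k),
      StrictMono fun x => (T.orderEmbOfFin hT x : ℕ) :=
    fun hT => Fin.val_strictMono.comp (OrderEmbedding.strictMono _)
  rw [permDesc_eq_descList_ofFn, ofFn_shuffleMax,
    descList_append_cons_of_forall_lt _ (by simp),
    descList_cons_of_forall_lt (by simp; omega) (by simp),
    descList_ofFn_comp_of_strictMono (hmono _), descList_ofFn_comp_of_strictMono (hmono _),
    add_assoc]

end

theorem shuffleMax_injective :
    Function.Injective
      fun x : {S : Finset (Fin (p + q)) // #S = p} × Perm (Fin p) × Perm (Fin q) =>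
        shuffleMax x.1 x.2.1 x.2.2 := by
  rintro ⟨S, α, β⟩ ⟨T, α', β'⟩ h
  obtain ⟨hST, rfl⟩ := eq_and_eq_of_orderEmbOfFin_apply_eq S.2 T.2 fun k => by
    simpa [shuffleMax_apply_castAdd] using DFunLike.congr_fun h (Fin.castAdd (q + 1) k)
  obtain ⟨-, rfl⟩ := eq_and_eq_of_orderEmbOfFin_apply_eq _ _ fun k => by
    simpa [shuffleMax_apply_natAdd_succ] using DFunLike.congr_fun h (Fin.natAdd p k.succ)
  rw [Subtype.ext hST]

theorem sum_neg_one_pow_permDesc_of_apply_eq_last (hq : 0 < q) :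
    ∑ σ : Perm (Fin (p + q + 1)) with σ ⟨p, by omega⟩ = Fin.last (p + q),
      (-1 : ℤ) ^ permDesc σ = -((p + q).choose p : ℤ) * phi p * phi q := by
  set Φ := fun x : {S : Finset (Fin (p + q)) // #S = p} × Perm (Fin p) × Perm (Fin q) =>
      shuffleMax x.1 x.2.1 x.2.2
  have hcard : Fintype.card
      ({S : Finset (Fin (p + q)) // #S = p} × Perm (Fin p) × Perm (Fin q)) = (p + q)! := by
    simp only [Fintype.card_prod, Fintype.card_finset_len, Fintype.card_perm, Fintype.card_fin]
    rw [← Nat.choose_mul_factorial_mul_factorial (Nat.le_add_right p q), Nat.add_sub_cancel_left,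
      mul_assoc]
  have himage : univ.image Φ =
      ({σ : Perm (Fin (p + q + 1)) | σ ⟨p, by omega⟩ = Fin.last (p + q)} : Finset _) := by
    refine eq_of_subset_of_card_le ?_ ?_
    · intro σ hσ
      obtain ⟨x, -, rfl⟩ := mem_image.mp hσ
      simpa using shuffleMax_apply_mid x.1 x.2.1 x.2.2
    · rw [card_filter_perm_apply_eq, card_image_of_injective _ shuffleMax_injective, card_univ,
        hcard]
      simp
  rw [← himage, sum_image fun x _ y _ h => shuffleMax_injective h]
  simp only [permDesc_shuffleMax _ _ _ hq, pow_succ, pow_add, mul_neg_one, sum_neg_distrib,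
    Fintype.sum_prod_type, ← Fintype.sum_mul_sum, phi, sum_const, card_univ,
    Fintype.card_finset_len, Fintype.card_fin, nsmul_eq_mul]
  ring

/-- for `n ≥ 3` and `2 ≤ i ≤ n-1`, the sum of `(-1)^{d(σ)}` over permutations
of `{1,…,n}` whose maximal value `n` occurs in position `i` equals
`-C(n-1, i-1) · φ(i-1) · φ(n-i)`. -/
theorem signed_sum_max_at_interior (n i : ℕ) (hi : 2 ≤ i) (hi' : i ≤ n - 1) :
    ∑ σ ∈ Finset.univ.filter
        (fun σ : Equiv.Perm (Fin n) =>
          σ ⟨i - 1, by omega⟩ = ⟨n - 1, by omega⟩),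
      (-1 : ℤ) ^ permDesc σ
      = -((n - 1).choose (i - 1) : ℤ) * phi (i - 1) * phi (n - i) := by
  obtain ⟨p, rfl⟩ : ∃ p, i = p + 1 := ⟨i - 1, by omega⟩
  obtain ⟨q, rfl⟩ : ∃ q, n = p + q + 1 := ⟨n - p - 1, by omega⟩
  simp only [Nat.add_sub_cancel, Nat.add_sub_add_right, Nat.add_sub_cancel_left]
  exact sum_neg_one_pow_permDesc_of_apply_eq_last (by omega)
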